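/- If the prior distribution q on {0,1}^N satisfies q(x) ≤ q(y) = q(ȳ) for some fixed string y and all x, then no-signalling boxes give no advantage at GYNI: the optimal no-signalling winning probability equals the optimal classical winning probability ω_c = 2q(y). In particular, for the uniform distribution q(x) = 1/2^N, ω_ns = ω_c = 1/2^{N−1}. -/

import Mathlib

/-! For a no-signalling box, pair each input `x` with the input obtained by flipping bit `k + 1`.
Parties `0, …, k` cannot see that bit, so their output marginals agree on the two inputs, while the
targets `x (i + 1)` differ only at party `k`; hence the two probabilities that parties `0, …, k`
all guess right add up to the probability that parties `0, …, k - 1` do. Peeling off parties one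
at a time gives `∑ₓ P(aᵢ = xᵢ₊₁ ∀ i | x) ≤ 2`, so every box wins with probability at most
`2 max q = 2 q(y)`. The local strategy in which each party bets that the input is `y` or `ȳ`
wins on both and attains `q(y) + q(ȳ) = 2 q(y)`. -/

open scoped BigOperators

/-- Bitwise negation of a bit string. -/
def negStr {N : ℕ} (x : Fin N → Bool) : Fin N → Bool := fun i => !(x i)

/-- A no-signalling box for `N` parties with binary inputs and outputs. -/
structure NSBox (N : ℕ) where
  P : (Fin N → Bool) → (Fin N → Bool) → ℝ
  nonneg : ∀ a x, 0 ≤ P a x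
  normalized : ∀ x, ∑ a, P a x = 1
  noSignalling : ∀ (S : Finset (Fin N)) (x x' : Fin N → Bool),
    (∀ i ∈ S, x i = x' i) → ∀ a : Fin N → Bool,
      ∑ a' ∈ Finset.univ.filter (fun a' => ∀ i ∈ S, a' i = a i), P a' x =
      ∑ a' ∈ Finset.univ.filter (fun a' => ∀ i ∈ S, a' i = a i), P a' x'

/-- GYNI winning probability of a no-signalling box for prior `q`. -/
noncomputable def gyniWin {N : ℕ} [NeZero N] (q : (Fin N → Bool) → ℝ) (B : NSBox N) : ℝ :=
  ∑ x, q x * B.P (fun i => x (i + 1)) x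

/-- The classical GYNI bound `ω_c = max_x (q(x) + q(x̄))`. -/
noncomputable def omegaC {N : ℕ} (q : (Fin N → Bool) → ℝ) : ℝ :=
  Finset.univ.sup' Finset.univ_nonempty (fun x => q x + q (negStr x))

/-- A deterministic local strategy wins the GYNI game on input string `x`. -/
def winsOn {N : ℕ} [NeZero N] (f : Fin N → Bool → Bool) (x : Fin N → Bool) : Bool :=
  decide (∀ i, f i (x i) = x (i + 1))

/-- Winning probability of a deterministic local strategy. -/
noncomputable def classWin {N : ℕ} [NeZero N] (q : (Fin N → Bool) → ℝ)
    (f : Fin N → Bool → Bool) : ℝ :=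
  ∑ x, q x * (if winsOn f x then (1:ℝ) else 0)

open Finset Function

variable {N : ℕ}

def neighbourInput [NeZero N] (x : Fin N → Bool) : Fin N → Bool := fun i => x (i + 1)

theorem neighbourInput_update [NeZero N] (x : Fin N → Bool) (j : Fin N) (b : Bool) :
    neighbourInput (update x (j + 1) b) = update (neighbourInput x) j b := by
  funext i
  by_cases hij : i = j
  · subst hij; simp [neighbourInput]
  · simp [neighbourInput, update_of_ne hij, update_of_ne (fun h => hij (add_right_cancel h))]

theorem negStr_ne_self [NeZero N] (x : Fin N → Bool) : negStr x ≠ x := fun h => by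
  simpa [negStr] using congrFun h 0

def initSeg (N k : ℕ) : Finset (Fin N) := univ.filter fun i => i.val < k

@[simp]
theorem mem_initSeg {k : ℕ} {i : Fin N} : i ∈ initSeg N k ↔ i.val < k := by
  simp [initSeg]

theorem initSeg_zero : initSeg N 0 = ∅ := by
  ext i; simp

theorem initSeg_succ {k : ℕ} (hk : k < N) : initSeg N (k + 1) = insert ⟨k, hk⟩ (initSeg N k) := by
  ext i; simp only [mem_initSeg, mem_insert, Fin.ext_iff]; omega

namespace NSBox

def marginal (B : NSBox N) (S : Finset (Fin N)) (a x : Fin N → Bool) : ℝ :=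
  ∑ a' ∈ univ.filter (fun a' => ∀ i ∈ S, a' i = a i), B.P a' x

variable (B : NSBox N)

theorem marginal_empty (a x : Fin N → Bool) : B.marginal ∅ a x = 1 := by
  simp [marginal, B.normalized]

theorem marginal_univ (a x : Fin N → Bool) : B.marginal univ a x = B.P a x := by
  have : univ.filter (fun a' : Fin N → Bool => ∀ i ∈ univ, a' i = a i) = {a} := by
    ext a'; simp [funext_iff]
  rw [marginal, this, sum_singleton]

theorem marginal_anti {S T : Finset (Fin N)} (hST : S ⊆ T) (a x : Fin N → Bool) :
    B.marginal T a x ≤ B.marginal S a x :=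
  sum_le_sum_of_subset_of_nonneg
    (fun a' ha' => by
      simp only [mem_filter, mem_univ, true_and] at ha' ⊢
      exact fun i hi => ha' i (hST hi))
    fun a' _ _ => B.nonneg a' x

theorem marginal_congr_input {S : Finset (Fin N)} {x x' : Fin N → Bool}
    (h : ∀ i ∈ S, x i = x' i) (a : Fin N → Bool) : B.marginal S a x = B.marginal S a x' :=
  B.noSignalling S x x' h a

theorem marginal_insert_add {S : Finset (Fin N)} {j : Fin N} (hj : j ∉ S) (a x : Fin N → Bool) :
    B.marginal (insert j S) a x + B.marginal (insert j S) (update a j (!a j)) x =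
      B.marginal S a x := by
  have hS : ∀ a' : Fin N → Bool, (∀ i ∈ S, a' i = update a j (!a j) i) ↔ ∀ i ∈ S, a' i = a i :=
    fun a' => forall₂_congr fun i hi => by rw [update_of_ne (ne_of_mem_of_not_mem hi hj)]
  simp only [marginal]
  rw [← sum_filter_add_sum_filter_not (univ.filter fun a' : Fin N → Bool => ∀ i ∈ S, a' i = a i)
    (fun a' => a' j = a j), filter_filter, filter_filter]
  congr 2 <;> ext a' <;> simp only [mem_filter, mem_univ, true_and, forall_mem_insert, hS,
    update_self, Bool.eq_not_iff, and_comm]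

theorem sum_marginal_initSeg_eq_two_mul [NeZero N] {k : ℕ} (hk : k + 1 < N) :
    ∑ x, B.marginal (initSeg N k) (neighbourInput x) x =
      2 * ∑ x, B.marginal (initSeg N (k + 1)) (neighbourInput x) x := by
  set j : Fin N := ⟨k, by omega⟩
  have hj : (j + 1).val = k + 1 := by
    simp [j, Fin.val_add, Nat.mod_eq_of_lt hk]
  have hflip_invol : Involutive fun x : Fin N → Bool => update x (j + 1) (!x (j + 1)) := by
    intro x; simp
  set flip := hflip_invol.toPerm
  have hpair : ∀ x, B.marginal (initSeg N (k + 1)) (neighbourInput x) x +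
      B.marginal (initSeg N (k + 1)) (neighbourInput (flip x)) (flip x) =
        B.marginal (initSeg N k) (neighbourInput x) x := by
    intro x
    have hflip_agree : ∀ i ∈ initSeg N (k + 1), x i = flip x i := fun i hi =>
      (update_of_ne (fun h => by simp [h, hj] at hi) _ _).symm
    rw [← B.marginal_congr_input hflip_agree, Function.Involutive.coe_toPerm,
      neighbourInput_update, initSeg_succ (by omega)]
    exact B.marginal_insert_add (by simp) _ x
  simp only [← hpair, sum_add_distrib, Equiv.sum_comp flip (fun x =>
    B.marginal (initSeg N (k + 1)) (neighbourInput x) x)]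
  ring

theorem sum_marginal_initSeg [NeZero N] :
    ∀ k < N, ∑ x, B.marginal (initSeg N k) (neighbourInput x) x = 2 ^ (N - k)
  | 0, _ => by simp [initSeg_zero, marginal_empty]
  | k + 1, hk => by
    have h := (B.sum_marginal_initSeg_eq_two_mul hk).symm.trans (sum_marginal_initSeg k (by omega))
    rw [show N - k = N - (k + 1) + 1 by omega, pow_succ] at h
    linarith

theorem sum_P_neighbourInput_le_two [NeZero N] : ∑ x, B.P (neighbourInput x) x ≤ 2 :=
  calc ∑ x, B.P (neighbourInput x) x
      = ∑ x, B.marginal univ (neighbourInput x) x := by simp only [marginal_univ]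
    _ ≤ ∑ x, B.marginal (initSeg N (N - 1)) (neighbourInput x) x :=
      sum_le_sum fun x _ => B.marginal_anti (subset_univ _) _ x
    _ = 2 := by
      rw [B.sum_marginal_initSeg (N - 1) (by have := NeZero.pos N; omega),
        Nat.sub_sub_self NeZero.one_le, pow_one]

theorem gyniWin_le_two_mul [NeZero N] {q : (Fin N → Bool) → ℝ} {M : ℝ} (hM : 0 ≤ M)
    (hqM : ∀ x, q x ≤ M) : gyniWin q B ≤ 2 * M :=
  calc gyniWin q B ≤ ∑ x, M * B.P (neighbourInput x) x :=
        sum_le_sum fun x _ => mul_le_mul_of_nonneg_right (hqM x) (B.nonneg _ x)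
    _ = M * ∑ x, B.P (neighbourInput x) x := (mul_sum _ _ _).symm
    _ ≤ M * 2 := mul_le_mul_of_nonneg_left B.sum_P_neighbourInput_le_two hM
    _ = 2 * M := mul_comm M 2

end NSBox

def NSBox.ofLocal (f : Fin N → Bool → Bool) : NSBox N where
  P a x := if a = fun i => f i (x i) then 1 else 0
  nonneg a x := by positivity
  normalized x := by simp
  noSignalling S x x' h a := by
    simp only [sum_ite_eq', mem_filter, mem_univ, true_and]
    congr 1
    exact propext <| forall₂_congr fun i hi => by rw [h i hi]

theorem gyniWin_ofLocal [NeZero N] (q : (Fin N → Bool) → ℝ) (f : Fin N → Bool → Bool) :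
    gyniWin q (NSBox.ofLocal f) = classWin q f := by
  refine sum_congr rfl fun x _ => ?_
  simp [NSBox.ofLocal, winsOn, funext_iff, eq_comm]

theorem add_le_classWin [NeZero N] {q : (Fin N → Bool) → ℝ} (hq : ∀ x, 0 ≤ q x)
    {f : Fin N → Bool → Bool} {x x' : Fin N → Bool} (hne : x ≠ x') (hx : winsOn f x)
    (hx' : winsOn f x') : q x + q x' ≤ classWin q f := by
  have hpair : ∑ z ∈ {x, x'}, q z * (if winsOn f z then (1 : ℝ) else 0) = q x + q x' := by
    simp [sum_pair hne, hx, hx']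
  rw [← hpair]
  exact sum_le_sum_of_subset_of_nonneg (subset_univ _) fun z _ _ =>
    mul_nonneg (hq z) (by positivity)

/-- Party `i` bets that the input is `y` or `negStr y`, whichever agrees with its own bit. -/
def pairStrategy [NeZero N] (y : Fin N → Bool) : Fin N → Bool → Bool :=
  fun i b => xor (xor b (y i)) (y (i + 1))

theorem winsOn_pairStrategy_self [NeZero N] (y : Fin N → Bool) : winsOn (pairStrategy y) y := by
  simp [winsOn, pairStrategy]

theorem winsOn_pairStrategy_negStr [NeZero N] (y : Fin N → Bool) :
    winsOn (pairStrategy y) (negStr y) := by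
  simp [winsOn, pairStrategy, negStr]

theorem omegaC_eq_two_mul {q : (Fin N → Bool) → ℝ} {y : Fin N → Bool} (hmax : ∀ x, q x ≤ q y)
    (hsym : q y = q (negStr y)) : omegaC q = 2 * q y := by
  refine le_antisymm (sup'_le _ _ fun x _ => by linarith [hmax x, hmax (negStr x)]) ?_
  rw [two_mul]
  nth_rw 2 [hsym]
  exact le_sup' (fun x => q x + q (negStr x)) (mem_univ y)

theorem gyni_ns_no_advantage_general {N : ℕ} [NeZero N]
    (q : (Fin N → Bool) → ℝ) (hq : ∀ x, 0 ≤ q x)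
    (y : Fin N → Bool) (hmax : ∀ x, q x ≤ q y) (hsym : q y = q (negStr y)) :
    omegaC q = 2 * q y ∧
      IsGreatest {w : ℝ | ∃ B : NSBox N, w = gyniWin q B} (2 * q y) := by
  have hclassical : 2 * q y ≤ gyniWin q (NSBox.ofLocal (pairStrategy y)) := by
    rw [gyniWin_ofLocal, two_mul]
    nth_rw 2 [hsym]
    exact add_le_classWin hq (negStr_ne_self y).symm (winsOn_pairStrategy_self y)
      (winsOn_pairStrategy_negStr y)
  refine ⟨omegaC_eq_two_mul hmax hsym, ⟨_, le_antisymm hclassical ?_⟩, ?_⟩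
  · exact NSBox.gyniWin_le_two_mul _ (hq y) hmax
  · rintro w ⟨B, rfl⟩
    exact B.gyniWin_le_two_mul (hq y) hmax

/-- If `q x ≤ q y = q ȳ` for some fixed `y` and all `x`, then no-signalling
boxes give no advantage over classical strategies at GYNI: the optimal
no-signalling winning probability equals `ω_c = 2 q y`. -/
theorem gyni_ns_no_advantage {N : ℕ} [NeZero N] (hN : 2 ≤ N)
    (q : (Fin N → Bool) → ℝ) (hq : ∀ x, 0 ≤ q x) (hsum : ∑ x, q x = 1)
    (y : Fin N → Bool) (hmax : ∀ x, q x ≤ q y) (hsym : q y = q (negStr y)) :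
    omegaC q = 2 * q y ∧
      IsGreatest {w : ℝ | ∃ B : NSBox N, w = gyniWin q B} (2 * q y) :=
  gyni_ns_no_advantage_general q hq y hmax hsym
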